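/- Let σ₀ and ω₁ be smooth real-valued functions on the open half-plane ℝ²₊. Define η₀ = ρ² e^{σ₀} and ω̄₁ = ω₁/η₀². Then at every point of ℝ²₊ the following identity holds: η₀² ⁷Δω̄₁ = ³Δω₁ - (4/ρ) ∂_ρ ω₁ - 4 ∂ω₁·∂σ₀ - 2 ω₁ ³Δσ₀ + (8/ρ) ω₁ ∂_ρ σ₀ + 4 ω₁ |∂σ₀|². -/

import Mathlib

open MeasureTheory Real

noncomputable section

/-- The open half-plane `{(ρ, z) : ρ > 0}`. -/
def halfPlane : Set (ℝ × ℝ) := {p | 0 < p.1}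

/-- Partial derivative with respect to the first variable `ρ`. -/
noncomputable def pdρ (f : ℝ × ℝ → ℝ) (p : ℝ × ℝ) : ℝ := fderiv ℝ f p (1, 0)

/-- Partial derivative with respect to the second variable `z`. -/
noncomputable def pdz (f : ℝ × ℝ → ℝ) (p : ℝ × ℝ) : ℝ := fderiv ℝ f p (0, 1)

/-- `|∂f|² = (∂_ρ f)² + (∂_z f)²`. -/
noncomputable def gradSq (f : ℝ × ℝ → ℝ) (p : ℝ × ℝ) : ℝ := (pdρ f p) ^ 2 + (pdz f p) ^ 2

/-- `∂f·∂g = ∂_ρ f ∂_ρ g + ∂_z f ∂_z g`. -/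
noncomputable def gradDot (f g : ℝ × ℝ → ℝ) (p : ℝ × ℝ) : ℝ :=
  pdρ f p * pdρ g p + pdz f p * pdz g p

/-- Flat 2-dimensional Laplacian `Δf = ∂²_ρ f + ∂²_z f`. -/
noncomputable def lap2 (f : ℝ × ℝ → ℝ) (p : ℝ × ℝ) : ℝ := pdρ (pdρ f) p + pdz (pdz f) p

/-- `³Δf = Δf + ∂_ρ f / ρ`. -/
noncomputable def lap3 (f : ℝ × ℝ → ℝ) (p : ℝ × ℝ) : ℝ := lap2 f p + pdρ f p / p.1

/-- `⁷Δf = Δf + 5 ∂_ρ f / ρ`. -/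
noncomputable def lap7 (f : ℝ × ℝ → ℝ) (p : ℝ × ℝ) : ℝ := lap2 f p + 5 * pdρ f p / p.1

/-- `η₀ = ρ² e^{σ₀}`. -/
noncomputable def eta (σ₀ : ℝ × ℝ → ℝ) : ℝ × ℝ → ℝ := fun p => p.1 ^ 2 * Real.exp (σ₀ p)

/-- `ω̄₁ = ω₁ / η₀²`. -/
noncomputable def omegaBar (η₀ ω₁ : ℝ × ℝ → ℝ) : ℝ × ℝ → ℝ := fun p => ω₁ p / (η₀ p) ^ 2

section Helpers

variable {f g : ℝ × ℝ → ℝ} {p d : ℝ × ℝ} {c : ℝ} {n : ℕ}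

private lemma pd_add (hf : DifferentiableAt ℝ f p) (hg : DifferentiableAt ℝ g p) :
    fderiv ℝ (fun x => f x + g x) p d = fderiv ℝ f p d + fderiv ℝ g p d := by
  rw [fderiv_fun_add hf hg]; simp

private lemma pd_sub (hf : DifferentiableAt ℝ f p) (hg : DifferentiableAt ℝ g p) :
    fderiv ℝ (fun x => f x - g x) p d = fderiv ℝ f p d - fderiv ℝ g p d := by
  rw [fderiv_fun_sub hf hg]; simp

private lemma pd_mul (hf : DifferentiableAt ℝ f p) (hg : DifferentiableAt ℝ g p) :
    fderiv ℝ (fun x => f x * g x) p d = fderiv ℝ f p d * g p + f p * fderiv ℝ g p d := by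
  rw [fderiv_fun_mul hf hg]
  simp only [ContinuousLinearMap.add_apply, ContinuousLinearMap.smul_apply, smul_eq_mul]
  ring

private lemma pd_const_mul (hf : DifferentiableAt ℝ f p) :
    fderiv ℝ (fun x => c * f x) p d = c * fderiv ℝ f p d := by
  rw [fderiv_const_mul hf]
  simp

private lemma pd_exp (hf : DifferentiableAt ℝ f p) :
    fderiv ℝ (fun x => Real.exp (f x)) p d = Real.exp (f p) * fderiv ℝ f p d := by
  rw [fderiv_exp hf]; simp

private lemma pd_inv (hf : DifferentiableAt ℝ f p) (h0 : f p ≠ 0) :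
    fderiv ℝ (fun x => (f x)⁻¹) p d = -(fderiv ℝ f p d) / f p ^ 2 := by
  have h : HasFDerivAt (fun x => (f x)⁻¹) ((-(f p ^ 2)⁻¹) • fderiv ℝ f p) p :=
    (hasDerivAt_inv h0).comp_hasFDerivAt p hf.hasFDerivAt
  rw [h.fderiv]
  simp only [ContinuousLinearMap.smul_apply, smul_eq_mul]
  ring

private lemma pd_fst : fderiv ℝ (fun x : ℝ × ℝ => x.1) p d = d.1 := by
  rw [fderiv_fst]; rfl

private lemma pd_fst_pow : fderiv ℝ (fun x : ℝ × ℝ => x.1 ^ n) p d = n * p.1 ^ (n - 1) * d.1 := by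
  have h : HasFDerivAt (fun x : ℝ × ℝ => x.1 ^ n)
      ((↑n * p.1 ^ (n - 1)) • ContinuousLinearMap.fst ℝ ℝ ℝ) p :=
    (hasDerivAt_pow n p.1).comp_hasFDerivAt p hasFDerivAt_fst
  rw [h.fderiv]
  simp [mul_comm]

private lemma isOpen_halfPlane : IsOpen halfPlane :=
  isOpen_lt continuous_const continuous_fst

private lemma pd_congr (h : ∀ q ∈ halfPlane, f q = g q) (hp : p ∈ halfPlane) :
    fderiv ℝ f p d = fderiv ℝ g p d := by
  rw [Filter.EventuallyEq.fderiv_eq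
    (Filter.eventually_of_mem (isOpen_halfPlane.mem_nhds hp) h)]

private lemma diff_base (hf : ContDiffOn ℝ (⊤ : ℕ∞) f halfPlane) (hp : p ∈ halfPlane) :
    DifferentiableAt ℝ f p :=
  (hf.differentiableOn (by simp)).differentiableAt (isOpen_halfPlane.mem_nhds hp)

private lemma diff_pd (hf : ContDiffOn ℝ (⊤ : ℕ∞) f halfPlane) (d : ℝ × ℝ) (hp : p ∈ halfPlane) :
    DifferentiableAt ℝ (fun q => fderiv ℝ f q d) p := by
  have h : ContDiffOn ℝ (⊤ : ℕ∞) (fun q => fderiv ℝ f q d) halfPlane :=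
    (hf.fderiv_of_isOpen isOpen_halfPlane le_rfl).clm_apply contDiffOn_const
  exact (h.differentiableOn (by simp)).differentiableAt (isOpen_halfPlane.mem_nhds hp)

private lemma exp_neg_two_mul' (x : ℝ) : Real.exp (-2 * x) = (Real.exp x ^ 2)⁻¹ := by
  have h : Real.exp x ^ 2 = Real.exp (2 * x) := by rw [two_mul, Real.exp_add, sq]
  rw [h, ← Real.exp_neg, neg_mul]

end Helpers

theorem omegaBar_laplacian_identity
    (σ₀ ω₁ : ℝ × ℝ → ℝ)
    (hσ₀ : ContDiffOn ℝ (⊤ : ℕ∞) σ₀ halfPlane) (hω₁ : ContDiffOn ℝ (⊤ : ℕ∞) ω₁ halfPlane) :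
    ∀ p ∈ halfPlane,
      (eta σ₀ p) ^ 2 * lap7 (omegaBar (eta σ₀) ω₁) p =
        lap3 ω₁ p - (4 / p.1) * pdρ ω₁ p - 4 * gradDot ω₁ σ₀ p
          - 2 * ω₁ p * lap3 σ₀ p + (8 / p.1) * ω₁ p * pdρ σ₀ p
          + 4 * ω₁ p * gradSq σ₀ p := by
  intro p hp
  have hρ : p.1 ≠ 0 := ne_of_gt hp
  -- rewrite omegaBar as a product
  have hG : ∀ q ∈ halfPlane, omegaBar (eta σ₀) ω₁ q
      = ω₁ q * Real.exp (-2 * σ₀ q) * (q.1 ^ 4)⁻¹ := by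
    intro q hq
    have hq1 : q.1 ≠ 0 := ne_of_gt hq
    simp only [omegaBar, eta, exp_neg_two_mul']
    rw [div_eq_mul_inv, mul_pow, mul_inv]
    ring
  -- first derivatives in a general direction, at any point of the half-plane
  have hd1 : ∀ (d : ℝ × ℝ), ∀ q ∈ halfPlane,
      fderiv ℝ (omegaBar (eta σ₀) ω₁) q d =
        Real.exp (-2 * σ₀ q) * (q.1 ^ 4)⁻¹ *
          (fderiv ℝ ω₁ q d - 2 * ω₁ q * fderiv ℝ σ₀ q d - 4 * ω₁ q * d.1 * (q.1)⁻¹) := by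
    intro d q hq
    have hq1 : q.1 ≠ 0 := ne_of_gt hq
    have hsq := diff_base hσ₀ hq
    have haq := diff_base hω₁ hq
    have hE : DifferentiableAt ℝ (fun x : ℝ × ℝ => Real.exp (-2 * σ₀ x)) q :=
      (hsq.const_mul (-2)).exp
    have h4 : (q.1 : ℝ) ^ 4 ≠ 0 := pow_ne_zero _ hq1
    rw [pd_congr hG hq, pd_mul (haq.fun_mul hE) ((differentiableAt_fst.fun_pow 4).fun_inv h4),
      pd_mul haq hE, pd_exp (hsq.const_mul (-2)), pd_const_mul hsq,
      pd_inv (differentiableAt_fst.fun_pow 4) h4, pd_fst_pow]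
    field_simp
    ring
  -- ρ-derivative on the half-plane
  have h1ρ : ∀ q ∈ halfPlane, pdρ (omegaBar (eta σ₀) ω₁) q =
      Real.exp (-2 * σ₀ q) * (q.1 ^ 4)⁻¹ *
        (pdρ ω₁ q - 2 * ω₁ q * pdρ σ₀ q - 4 * ω₁ q * (q.1)⁻¹) := by
    intro q hq
    have h := hd1 (1, 0) q hq
    simp only [pdρ]
    simpa using h
  -- z-derivative on the half-plane
  have h1z : ∀ q ∈ halfPlane, pdz (omegaBar (eta σ₀) ω₁) q =
      Real.exp (-2 * σ₀ q) * (q.1 ^ 4)⁻¹ *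
        (pdz ω₁ q - 2 * ω₁ q * pdz σ₀ q) := by
    intro q hq
    have h := hd1 (0, 1) q hq
    simp only [pdz]
    simpa using h
  -- differentiability facts at p
  have hsp := diff_base hσ₀ hp
  have hap := diff_base hω₁ hp
  have hsρ : DifferentiableAt ℝ (pdρ σ₀) p := diff_pd hσ₀ (1, 0) hp
  have haρ : DifferentiableAt ℝ (pdρ ω₁) p := diff_pd hω₁ (1, 0) hp
  have hsz : DifferentiableAt ℝ (pdz σ₀) p := diff_pd hσ₀ (0, 1) hp
  have haz : DifferentiableAt ℝ (pdz ω₁) p := diff_pd hω₁ (0, 1) hp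
  have hE : DifferentiableAt ℝ (fun x : ℝ × ℝ => Real.exp (-2 * σ₀ x)) p :=
    (hsp.const_mul (-2)).exp
  have h4 : (p.1 : ℝ) ^ 4 ≠ 0 := pow_ne_zero _ hρ
  have hinv4 : DifferentiableAt ℝ (fun x : ℝ × ℝ => (x.1 ^ 4)⁻¹) p :=
    (differentiableAt_fst.fun_pow 4).fun_inv h4
  have hinv1 : DifferentiableAt ℝ (fun x : ℝ × ℝ => (x.1)⁻¹) p :=
    differentiableAt_fst.fun_inv hρ
  -- second ρ-derivative at p
  have h2ρ : pdρ (pdρ (omegaBar (eta σ₀) ω₁)) p =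
      Real.exp (-2 * σ₀ p) * (p.1 ^ 4)⁻¹ *
        (pdρ (pdρ ω₁) p - 2 * pdρ ω₁ p * pdρ σ₀ p - 2 * ω₁ p * pdρ (pdρ σ₀) p
          - 4 * pdρ ω₁ p * (p.1)⁻¹ + 4 * ω₁ p * (p.1 ^ 2)⁻¹
          + (-2 * pdρ σ₀ p - 4 * (p.1)⁻¹) *
            (pdρ ω₁ p - 2 * ω₁ p * pdρ σ₀ p - 4 * ω₁ p * (p.1)⁻¹)) := by
    have hbig : DifferentiableAt ℝ
        (fun x => pdρ ω₁ x - 2 * ω₁ x * pdρ σ₀ x - 4 * ω₁ x * (x.1)⁻¹) p :=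
      (haρ.fun_sub ((hap.const_mul 2).fun_mul hsρ)).fun_sub ((hap.const_mul 4).fun_mul hinv1)
    show fderiv ℝ (pdρ (omegaBar (eta σ₀) ω₁)) p (1, 0) = _
    rw [pd_congr h1ρ hp, pd_mul (hE.fun_mul hinv4) hbig, pd_mul hE hinv4,
      pd_exp (hsp.const_mul (-2)), pd_const_mul hsp,
      pd_inv (differentiableAt_fst.fun_pow 4) h4, pd_fst_pow,
      pd_sub (haρ.fun_sub ((hap.const_mul 2).fun_mul hsρ)) ((hap.const_mul 4).fun_mul hinv1),
      pd_sub haρ ((hap.const_mul 2).fun_mul hsρ),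
      pd_mul (hap.const_mul 2) hsρ, pd_mul (hap.const_mul 4) hinv1,
      pd_const_mul hap, pd_const_mul hap, pd_inv differentiableAt_fst hρ, pd_fst]
    simp only [pdρ]
    field_simp
    ring
  -- second z-derivative at p
  have h2z : pdz (pdz (omegaBar (eta σ₀) ω₁)) p =
      Real.exp (-2 * σ₀ p) * (p.1 ^ 4)⁻¹ *
        (pdz (pdz ω₁) p - 2 * pdz ω₁ p * pdz σ₀ p - 2 * ω₁ p * pdz (pdz σ₀) p
          + (-2 * pdz σ₀ p) * (pdz ω₁ p - 2 * ω₁ p * pdz σ₀ p)) := by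
    have hbig : DifferentiableAt ℝ
        (fun x => pdz ω₁ x - 2 * ω₁ x * pdz σ₀ x) p :=
      haz.fun_sub ((hap.const_mul 2).fun_mul hsz)
    show fderiv ℝ (pdz (omegaBar (eta σ₀) ω₁)) p (0, 1) = _
    rw [pd_congr h1z hp, pd_mul (hE.fun_mul hinv4) hbig, pd_mul hE hinv4,
      pd_exp (hsp.const_mul (-2)), pd_const_mul hsp,
      pd_inv (differentiableAt_fst.fun_pow 4) h4, pd_fst_pow,
      pd_sub haz ((hap.const_mul 2).fun_mul hsz),
      pd_mul (hap.const_mul 2) hsz, pd_const_mul hap]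
    simp only [pdz]
    field_simp
    ring
  -- assemble
  simp only [lap7, lap3, lap2, gradDot, gradSq, eta]
  rw [h2ρ, h2z, h1ρ p hp, exp_neg_two_mul' (σ₀ p)]
  field_simp
  ring

end
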